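/- For every μ ∈ (0,1) and σ² > 0, the variance of the Simplex distribution is ∫₀¹ (y−μ)² f(y; μ, σ²) dy = μ(1−μ) − √(1/(2σ²)) · exp( 1/(2σ² μ²(1−μ)²) ) · Γ( 1/2, 1/(2σ² μ²(1−μ)²) ), where Γ(a, b) = ∫_b^∞ x^{a−1} e^{−x} dx is the upper incomplete gamma function. -/

import Mathlib

open MeasureTheory Real

/-- Unit deviance of the Simplex distribution. -/
noncomputable def simplexDev (y μ : ℝ) : ℝ :=
  (y - μ) ^ 2 / (y * (1 - y) * μ ^ 2 * (1 - μ) ^ 2)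

/-- Density of the Simplex distribution. -/
noncomputable def simplexPdf (μ σ2 y : ℝ) : ℝ :=
  (2 * π * σ2 * (y * (1 - y)) ^ 3) ^ (-(1/2 : ℝ)) * Real.exp (-simplexDev y μ / (2 * σ2))

/-- Upper incomplete gamma function Γ(a, b) = ∫_b^∞ x^{a-1} e^{-x} dx. -/
noncomputable def upperGamma (a b : ℝ) : ℝ :=
  ∫ x in Set.Ioi b, x ^ (a - 1) * Real.exp (-x)

/-!
The substitution `s = (y - μ) / √(μ(1-μ) y(1-y))` is an increasing bijection `(0,1) → ℝ` with
`s² = μ(1-μ) d(y;μ)`; it turns the variance into a constant times `∫ s² e^{-βs²} w(y) ds`,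
where `β = 1/(2σ²μ(1-μ))` and `w` is the Jacobian weight `simplexWeight`. The points `s` and
`-s`, which have the same deviance, have odds ratios `t²` and `t⁻²` relative to `μ`, and their
weights add up to `1/(1 + μ(1-μ)s²)`. Writing `1/(1 + ms²) = ∫₀^∞ e^{-(1+ms²)v} dv` and
exchanging the integrals leaves a Gaussian integral in `s` and then, after `x = v + β/μ(1-μ)`,
the incomplete gamma integral.
-/

open Set

noncomputable section

def simplexScore (μ y : ℝ) : ℝ := (y - μ) / √(μ * (1 - μ) * (y * (1 - y)))

def simplexScoreDeriv (μ y : ℝ) : ℝ :=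
  (y * (1 - μ) + μ * (1 - y)) / (2 * (y * (1 - y)) * √(μ * (1 - μ) * (y * (1 - y))))

-- The odds of `oddsScale μ t` are `t²` times the odds of `μ`.
def oddsScale (μ t : ℝ) : ℝ := μ * t ^ 2 / (1 - μ + μ * t ^ 2)

-- `exp (arsinh (s / 2))` is the positive root `t` of `t - t⁻¹ = s`.
def simplexScoreInv (μ s : ℝ) : ℝ := oddsScale μ (exp (arsinh (s / 2)))

def simplexWeight (μ y : ℝ) : ℝ := y * (1 - y) / (y * (1 - μ) + μ * (1 - y))

def scoreIntegrand (μ b s : ℝ) : ℝ :=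
  s ^ 2 * exp (-b * s ^ 2) * simplexWeight μ (simplexScoreInv μ s)

end

lemma exp_arsinh_div_two_sub_inv (s : ℝ) :
    exp (arsinh (s / 2)) - (exp (arsinh (s / 2)))⁻¹ = s := by
  have h := sinh_eq (arsinh (s / 2))
  rw [sinh_arsinh] at h
  rw [← exp_neg]
  linarith

lemma exp_arsinh_neg_div_two (s : ℝ) : exp (arsinh (-s / 2)) = (exp (arsinh (s / 2)))⁻¹ := by
  rw [neg_div, arsinh_neg, exp_neg]

section OddsScale

variable {μ t : ℝ}

lemma oddsScale_mem_Ioo (hμ : μ ∈ Ioo 0 1) (ht : t ≠ 0) : oddsScale μ t ∈ Ioo 0 1 := by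
  obtain ⟨hμ0, hμ1⟩ := hμ
  have hD : 0 < 1 - μ + μ * t ^ 2 := by have := sub_pos.2 hμ1; positivity
  refine ⟨by unfold oddsScale; positivity, ?_⟩
  rw [oddsScale, div_lt_one hD]
  linarith

lemma simplexScore_oddsScale (hμ : μ ∈ Ioo 0 1) (ht : 0 < t) :
    simplexScore μ (oddsScale μ t) = t - t⁻¹ := by
  obtain ⟨hμ0, hμ1⟩ := hμ
  have h1μ : 0 < 1 - μ := sub_pos.2 hμ1
  have hD : 0 < 1 - μ + μ * t ^ 2 := by positivity
  have hroot : μ * (1 - μ) * (oddsScale μ t * (1 - oddsScale μ t))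
      = (μ * (1 - μ) * t / (1 - μ + μ * t ^ 2)) ^ 2 := by
    unfold oddsScale; field_simp; ring
  rw [simplexScore, hroot, sqrt_sq (by positivity), oddsScale]
  field_simp
  ring

lemma simplexWeight_oddsScale (hμ : μ ∈ Ioo 0 1) (ht : t ≠ 0) :
    simplexWeight μ (oddsScale μ t) = t ^ 2 / ((1 - μ + μ * t ^ 2) * (1 + t ^ 2)) := by
  obtain ⟨hμ0, hμ1⟩ := hμ
  have h1μ : 0 < 1 - μ := sub_pos.2 hμ1
  have hD : 0 < 1 - μ + μ * t ^ 2 := by positivity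
  have h1y : 1 - oddsScale μ t = (1 - μ) / (1 - μ + μ * t ^ 2) := by
    unfold oddsScale; field_simp; ring
  rw [simplexWeight, h1y, oddsScale]
  field_simp
  ring

end OddsScale

section Score

variable {μ y : ℝ}

lemma hasDerivAt_simplexScore (hμ : μ ∈ Ioo 0 1) (hy : y ∈ Ioo 0 1) :
    HasDerivAt (simplexScore μ) (simplexScoreDeriv μ y) y := by
  obtain ⟨hμ0, hμ1⟩ := hμ
  obtain ⟨hy0, hy1⟩ := hy
  have h1μ : 0 < 1 - μ := sub_pos.2 hμ1
  have h1y : 0 < 1 - y := sub_pos.2 hy1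
  have hw : 0 < μ * (1 - μ) * (y * (1 - y)) := by positivity
  have hq : HasDerivAt (fun z => μ * (1 - μ) * (z * (1 - z)))
      (μ * (1 - μ) * (1 * (1 - y) + y * (0 - 1))) y :=
    ((hasDerivAt_id' y).mul ((hasDerivAt_const y 1).sub (hasDerivAt_id' y))).const_mul _
  refine (((hasDerivAt_id' y).sub_const μ).div (hq.sqrt hw.ne') (sqrt_pos.2 hw).ne').congr_deriv ?_
  have hsq := sq_sqrt hw.le
  have hr := sqrt_pos.2 hw
  rw [simplexScoreDeriv]
  generalize √(μ * (1 - μ) * (y * (1 - y))) = r at hsq hr ⊢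
  field_simp
  linear_combination (y + 2 * y * μ - μ - 2 * y ^ 2) * hsq

lemma simplexScoreDeriv_pos (hμ : μ ∈ Ioo 0 1) (hy : y ∈ Ioo 0 1) : 0 < simplexScoreDeriv μ y := by
  obtain ⟨hμ0, hμ1⟩ := hμ
  obtain ⟨hy0, hy1⟩ := hy
  have h1μ : 0 < 1 - μ := sub_pos.2 hμ1
  have h1y : 0 < 1 - y := sub_pos.2 hy1
  have hw : 0 < μ * (1 - μ) * (y * (1 - y)) := by positivity
  have := sqrt_pos.2 hw
  unfold simplexScoreDeriv
  positivity

lemma strictMonoOn_simplexScore (hμ : μ ∈ Ioo 0 1) : StrictMonoOn (simplexScore μ) (Ioo 0 1) := by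
  refine strictMonoOn_of_hasDerivWithinAt_pos (f' := simplexScoreDeriv μ) (convex_Ioo 0 1)
    (fun y hy => (hasDerivAt_simplexScore hμ hy).continuousAt.continuousWithinAt)
    (fun y hy => ?_) (fun y hy => ?_) <;> rw [interior_Ioo] at hy
  · exact (hasDerivAt_simplexScore hμ hy).hasDerivWithinAt
  · exact simplexScoreDeriv_pos hμ hy

lemma simplexScore_simplexScoreInv (hμ : μ ∈ Ioo 0 1) (s : ℝ) :
    simplexScore μ (simplexScoreInv μ s) = s := by
  rw [simplexScoreInv, simplexScore_oddsScale hμ (exp_pos _), exp_arsinh_div_two_sub_inv]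

lemma simplexScoreInv_mem_Ioo (hμ : μ ∈ Ioo 0 1) (s : ℝ) : simplexScoreInv μ s ∈ Ioo 0 1 :=
  oddsScale_mem_Ioo hμ (exp_pos _).ne'

lemma image_simplexScore (hμ : μ ∈ Ioo 0 1) : simplexScore μ '' Ioo 0 1 = univ :=
  eq_univ_of_forall fun s =>
    ⟨simplexScoreInv μ s, simplexScoreInv_mem_Ioo hμ s, simplexScore_simplexScoreInv hμ s⟩

lemma simplexScoreInv_simplexScore (hμ : μ ∈ Ioo 0 1) (hy : y ∈ Ioo 0 1) :
    simplexScoreInv μ (simplexScore μ y) = y :=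
  (strictMonoOn_simplexScore hμ).injOn (simplexScoreInv_mem_Ioo hμ _) hy
    (simplexScore_simplexScoreInv hμ _)

end Score

lemma simplexWeight_simplexScoreInv_add_neg {μ : ℝ} (hμ : μ ∈ Ioo 0 1) (s : ℝ) :
    simplexWeight μ (simplexScoreInv μ s) + simplexWeight μ (simplexScoreInv μ (-s))
      = 1 / (1 + μ * (1 - μ) * s ^ 2) := by
  obtain ⟨hμ0, hμ1⟩ := id hμ
  have h1μ : 0 < 1 - μ := sub_pos.2 hμ1
  set t := exp (arsinh (s / 2)) with ht
  have ht0 : 0 < t := exp_pos _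
  rw [simplexScoreInv, simplexScoreInv, exp_arsinh_neg_div_two, ← ht,
    simplexWeight_oddsScale hμ ht0.ne', simplexWeight_oddsScale hμ (inv_ne_zero ht0.ne'),
    ← exp_arsinh_div_two_sub_inv s, ← ht]
  field_simp
  ring

lemma simplexWeight_nonneg {μ y : ℝ} (hμ : μ ∈ Icc 0 1) (hy : y ∈ Icc 0 1) :
    0 ≤ simplexWeight μ y := by
  obtain ⟨hμ0, hμ1⟩ := hμ
  obtain ⟨hy0, hy1⟩ := hy
  have := sub_nonneg.2 hμ1
  have := sub_nonneg.2 hy1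
  unfold simplexWeight
  positivity

lemma simplexWeight_simplexScoreInv_mem_Icc {μ : ℝ} (hμ : μ ∈ Ioo 0 1) (s : ℝ) :
    simplexWeight μ (simplexScoreInv μ s) ∈ Icc 0 1 := by
  have hw : ∀ s, 0 ≤ simplexWeight μ (simplexScoreInv μ s) := fun s =>
    simplexWeight_nonneg (Ioo_subset_Icc_self hμ)
      (Ioo_subset_Icc_self (simplexScoreInv_mem_Ioo hμ s))
  have hm : 0 < μ * (1 - μ) := mul_pos hμ.1 (sub_pos.2 hμ.2)
  have hsum_le : 1 / (1 + μ * (1 - μ) * s ^ 2) ≤ 1 :=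
    (div_le_one (by positivity)).2 (le_add_of_nonneg_right (by positivity))
  refine ⟨hw s, ?_⟩
  linarith [hw (-s), simplexWeight_simplexScoreInv_add_neg hμ s]

lemma rpow_neg_half_mul_cube {c x : ℝ} (hc : 0 ≤ c) (hx : 0 ≤ x) :
    (c * x ^ 3) ^ (-(1 / 2 : ℝ)) = (√c * (x * √x))⁻¹ := by
  rw [rpow_neg (by positivity), ← sqrt_eq_rpow, sqrt_mul hc, pow_succ, sqrt_mul (by positivity),
    sqrt_sq hx]

lemma sq_sub_mul_simplexPdf {μ σ2 y : ℝ} (hμ : μ ∈ Ioo 0 1) (hσ : 0 < σ2) (hy : y ∈ Ioo 0 1) :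
    (y - μ) ^ 2 * simplexPdf μ σ2 y
      = 2 * (μ * (1 - μ)) * √(μ * (1 - μ)) / √(2 * π * σ2)
        * (simplexScoreDeriv μ y * scoreIntegrand μ (1 / (2 * σ2 * (μ * (1 - μ))))
          (simplexScore μ y)) := by
  obtain ⟨hμ0, hμ1⟩ := id hμ
  obtain ⟨hy0, hy1⟩ := id hy
  have h1μ : 0 < 1 - μ := sub_pos.2 hμ1
  have h1y : 0 < 1 - y := sub_pos.2 hy1
  have hm : 0 < μ * (1 - μ) := by positivity
  have hq : 0 < y * (1 - y) := by positivity
  have hscore_sq : simplexScore μ y ^ 2 = (y - μ) ^ 2 / (μ * (1 - μ) * (y * (1 - y))) := by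
    rw [simplexScore, div_pow, sq_sqrt (by positivity)]
  have hexp : -simplexDev y μ / (2 * σ2)
      = -(1 / (2 * σ2 * (μ * (1 - μ)))) * simplexScore μ y ^ 2 := by
    rw [hscore_sq, simplexDev]; field_simp
  rw [scoreIntegrand, simplexScoreInv_simplexScore hμ hy, simplexPdf, hexp,
    rpow_neg_half_mul_cube (by positivity) hq.le, simplexScoreDeriv, simplexWeight, hscore_sq,
    sqrt_mul hm.le]
  have hnum : 0 < y * (1 - μ) + μ * (1 - y) := by positivity
  have := sqrt_pos.2 hm
  have := sqrt_pos.2 hq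
  have := sqrt_pos.2 (by positivity : 0 < 2 * π * σ2)
  field_simp

lemma integral_eq_integral_Ioi_add_comp_neg {E : Type*} [NormedAddCommGroup E] [NormedSpace ℝ E]
    {f : ℝ → E} (hf : Integrable f) : ∫ x, f x = ∫ x in Ioi 0, (f x + f (-x)) := by
  rw [integral_add hf.integrableOn hf.comp_neg.integrableOn, integral_comp_neg_Ioi, neg_zero,
    add_comm, intervalIntegral.integral_Iic_add_Ioi hf.integrableOn hf.integrableOn]

lemma integrable_scoreIntegrand {μ b : ℝ} (hμ : μ ∈ Ioo 0 1) (hb : 0 < b) :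
    Integrable (scoreIntegrand μ b) := by
  have hdom : Integrable fun s : ℝ => s ^ 2 * exp (-b * s ^ 2) := by
    simpa using integrable_rpow_mul_exp_neg_mul_sq hb (s := 2) (by norm_num)
  refine hdom.mono' ?_ (Filter.Eventually.of_forall fun s => ?_)
  · refine Measurable.aestronglyMeasurable ?_
    have := continuous_arsinh.measurable
    unfold scoreIntegrand simplexWeight simplexScoreInv oddsScale
    fun_prop
  · obtain ⟨hw0, hw1⟩ := simplexWeight_simplexScoreInv_mem_Icc hμ s
    rw [scoreIntegrand, norm_of_nonneg (by positivity)]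
    exact mul_le_of_le_one_right (by positivity) hw1

lemma integral_scoreIntegrand {μ b : ℝ} (hμ : μ ∈ Ioo 0 1) (hb : 0 < b) :
    ∫ s, scoreIntegrand μ b s
      = ∫ s in Ioi 0, s ^ 2 * exp (-b * s ^ 2) / (1 + μ * (1 - μ) * s ^ 2) := by
  rw [integral_eq_integral_Ioi_add_comp_neg (integrable_scoreIntegrand hμ hb)]
  refine setIntegral_congr_fun measurableSet_Ioi fun s _ => ?_
  rw [scoreIntegrand, scoreIntegrand, neg_sq, ← mul_add, simplexWeight_simplexScoreInv_add_neg hμ,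
    mul_one_div]

lemma integral_sq_sub_mul_simplexPdf {μ σ2 : ℝ} (hμ : μ ∈ Ioo 0 1) (hσ : 0 < σ2) :
    ∫ y in Ioo 0 1, (y - μ) ^ 2 * simplexPdf μ σ2 y
      = 2 * (μ * (1 - μ)) * √(μ * (1 - μ)) / √(2 * π * σ2)
        * ∫ s, scoreIntegrand μ (1 / (2 * σ2 * (μ * (1 - μ)))) s := by
  set K := 2 * (μ * (1 - μ)) * √(μ * (1 - μ)) / √(2 * π * σ2)
  set G := scoreIntegrand μ (1 / (2 * σ2 * (μ * (1 - μ))))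
  calc ∫ y in Ioo 0 1, (y - μ) ^ 2 * simplexPdf μ σ2 y
      = ∫ y in Ioo 0 1, |simplexScoreDeriv μ y| • (K * G (simplexScore μ y)) :=
        setIntegral_congr_fun measurableSet_Ioo fun y hy => by
          rw [abs_of_pos (simplexScoreDeriv_pos hμ hy), smul_eq_mul, sq_sub_mul_simplexPdf hμ hσ hy]
          ring
    _ = ∫ s in simplexScore μ '' Ioo 0 1, K * G s :=
        (integral_image_eq_integral_abs_deriv_smul measurableSet_Ioo
          (fun y hy => (hasDerivAt_simplexScore hμ hy).hasDerivWithinAt)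
          (strictMonoOn_simplexScore hμ).injOn fun s => K * G s).symm
    _ = K * ∫ s, G s := by
        rw [image_simplexScore hμ, Measure.restrict_univ, integral_const_mul]

lemma inv_eq_integral_exp_neg_mul {c : ℝ} (hc : 0 < c) : c⁻¹ = ∫ v in Ioi 0, exp (-c * v) := by
  rw [integral_exp_mul_Ioi (neg_lt_zero.2 hc), mul_zero, exp_zero, div_neg, neg_div, neg_neg,
    one_div]

lemma upperGamma_eq_exp_neg_mul_integral (a A : ℝ) :
    upperGamma a A = exp (-A) * ∫ v in Ioi 0, (v + A) ^ (a - 1) * exp (-v) := by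
  rw [upperGamma, ← (measurePreserving_add_right volume A).setIntegral_preimage_emb
    (measurableEmbedding_addRight A), preimage_add_const_Ioi, sub_self, ← integral_const_mul]
  refine setIntegral_congr_fun measurableSet_Ioi fun v _ => ?_
  rw [neg_add, exp_add]
  ring

lemma integral_exp_neg_mul_sq_div_one_add_mul_sq_eq {b m : ℝ} (hb : 0 < b) (hm : 0 ≤ m) :
    ∫ s in Ioi 0, exp (-b * s ^ 2) / (1 + m * s ^ 2)
      = ∫ v in Ioi 0, exp (-v) * (√(π / (b + m * v)) / 2) := by
  have hprod : Integrable
      (Function.uncurry fun s v : ℝ => exp (-b * s ^ 2) * exp (-(1 + m * s ^ 2) * v))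
      ((volume.restrict (Ioi 0)).prod (volume.restrict (Ioi 0))) := by
    have hdom : Integrable (fun p : ℝ × ℝ => exp (-b * p.1 ^ 2) * exp (-p.2))
        ((volume.restrict (Ioi 0)).prod (volume.restrict (Ioi 0))) :=
      Integrable.mul_prod (integrable_exp_neg_mul_sq hb).integrableOn
        (by simpa [IntegrableOn] using exp_neg_integrableOn_Ioi 0 zero_lt_one)
    refine hdom.mono' (by fun_prop) ?_
    rw [Measure.prod_restrict]
    filter_upwards [ae_restrict_mem (measurableSet_Ioi.prod measurableSet_Ioi)] with p hp
    have hv : 0 < p.2 := hp.2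
    rw [Function.uncurry_apply_pair, norm_of_nonneg (by positivity)]
    gcongr
    nlinarith [mul_nonneg (mul_nonneg hm (sq_nonneg p.1)) hv.le]
  calc ∫ s in Ioi 0, exp (-b * s ^ 2) / (1 + m * s ^ 2)
      = ∫ s in Ioi 0, ∫ v in Ioi 0, exp (-b * s ^ 2) * exp (-(1 + m * s ^ 2) * v) :=
        setIntegral_congr_fun measurableSet_Ioi fun s _ => by
          rw [integral_const_mul, ← inv_eq_integral_exp_neg_mul (by positivity), div_eq_mul_inv]
    _ = ∫ v in Ioi 0, ∫ s in Ioi 0, exp (-b * s ^ 2) * exp (-(1 + m * s ^ 2) * v) :=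
        integral_integral_swap hprod
    _ = ∫ v in Ioi 0, exp (-v) * (√(π / (b + m * v)) / 2) :=
        setIntegral_congr_fun measurableSet_Ioi fun v _ => by
          simp_rw [← integral_gaussian_Ioi, ← integral_const_mul, ← exp_add]
          congr with s
          ring_nf

lemma integral_exp_neg_mul_sq_div_one_add_mul_sq {b m : ℝ} (hb : 0 < b) (hm : 0 < m) :
    ∫ s in Ioi 0, exp (-b * s ^ 2) / (1 + m * s ^ 2)
      = √π / (2 * √m) * exp (b / m) * upperGamma (1 / 2) (b / m) := by
  rw [integral_exp_neg_mul_sq_div_one_add_mul_sq_eq hb hm.le, upperGamma_eq_exp_neg_mul_integral,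
    mul_assoc, ← mul_assoc (exp _), ← exp_add, add_neg_cancel, exp_zero, one_mul,
    ← integral_const_mul]
  refine setIntegral_congr_fun measurableSet_Ioi fun v (hv : 0 < v) => ?_
  have hvA : 0 < v + b / m := by positivity
  rw [show b + m * v = m * (v + b / m) by field_simp; ring, sqrt_div pi_pos.le,
    sqrt_mul hm.le, show (1 / 2 : ℝ) - 1 = -(1 / 2) by norm_num, rpow_neg hvA.le,
    ← sqrt_eq_rpow]
  have := sqrt_pos.2 hm
  have := sqrt_pos.2 hvA
  field_simp

lemma integral_sq_mul_exp_neg_mul_sq_div_one_add_mul_sq {b m : ℝ} (hb : 0 < b) (hm : 0 < m) :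
    ∫ s in Ioi 0, s ^ 2 * exp (-b * s ^ 2) / (1 + m * s ^ 2)
      = (√(π / b) / 2 - √π / (2 * √m) * exp (b / m) * upperGamma (1 / 2) (b / m)) / m := by
  have hgauss : IntegrableOn (fun s : ℝ => exp (-b * s ^ 2)) (Ioi 0) :=
    (integrable_exp_neg_mul_sq hb).integrableOn
  have hdiv : IntegrableOn (fun s : ℝ => exp (-b * s ^ 2) / (1 + m * s ^ 2)) (Ioi 0) := by
    refine hgauss.mono' (Measurable.aestronglyMeasurable (by fun_prop))
      (Filter.Eventually.of_forall fun s => ?_)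
    rw [norm_of_nonneg (by positivity)]
    exact div_le_self (exp_pos _).le (le_add_of_nonneg_right (by positivity))
  rw [← integral_gaussian_Ioi, ← integral_exp_neg_mul_sq_div_one_add_mul_sq hb hm,
    ← integral_sub hgauss hdiv, ← integral_div]
  refine setIntegral_congr_fun measurableSet_Ioi fun s _ => ?_
  field_simp
  ring

theorem simplex_variance (μ σ2 : ℝ) (hμ : μ ∈ Set.Ioo (0:ℝ) 1) (hσ : 0 < σ2) :
    ∫ y in Set.Ioo (0:ℝ) 1, (y - μ) ^ 2 * simplexPdf μ σ2 y
      = μ * (1 - μ) - Real.sqrt (1 / (2 * σ2))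
          * Real.exp (1 / (2 * σ2 * μ ^ 2 * (1 - μ) ^ 2))
          * upperGamma (1/2) (1 / (2 * σ2 * μ ^ 2 * (1 - μ) ^ 2)) := by
  have hm : 0 < μ * (1 - μ) := mul_pos hμ.1 (sub_pos.2 hμ.2)
  have hβ : 0 < 1 / (2 * σ2 * (μ * (1 - μ))) := by positivity
  have hpi : 0 < 2 * π * σ2 := by positivity
  rw [integral_sq_sub_mul_simplexPdf hμ hσ, integral_scoreIntegrand hμ hβ,
    integral_sq_mul_exp_neg_mul_sq_div_one_add_mul_sq hβ hm,
    show 1 / (2 * σ2 * (μ * (1 - μ))) / (μ * (1 - μ)) = 1 / (2 * σ2 * μ ^ 2 * (1 - μ) ^ 2) by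
      field_simp,
    show π / (1 / (2 * σ2 * (μ * (1 - μ)))) = 2 * π * σ2 * (μ * (1 - μ)) by field_simp,
    show 1 / (2 * σ2) = π / (2 * π * σ2) by field_simp,
    sqrt_mul hpi.le, sqrt_div pi_pos.le]
  have := sqrt_pos.2 hm
  have := sqrt_pos.2 hpi
  field_simp
  rw [sq_sqrt hm.le, mul_div_cancel_left₀ _ hm.ne']
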